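/- Fix τ ∈ ℝ and ω ∈ U, let η₊, η₋ be the explicit decaying solutions from the context, and set φ := i·λ(ω)·(e^(-iτ)+1) - ω·(e^(-iτ)-1); assume φ ≠ 0. Let f : ℝ → ℂ² be continuous with compact support. Define γ : ℝ → ℂ² by γ(x) = (i/φ)·[ η₊(x)·∫_{-∞}^{x} (η₋,₂(y)·f₁(y) + η₋,₁(y)·f₂(y)) dy + η₋(x)·∫_{x}^{∞} (η₊,₂(y)·f₁(y) + η₊,₁(y)·f₂(y)) dy ]. Then γ is continuous on ℝ, differentiable at every x ≠ 0, and satisfies the inhomogeneous Dirac equation (D(τ) - ω)γ = f away from 0: i·σ₃·γ'(x) + σ₁·γ(x) - ω·γ(x) = f(x) for every x < 0, and i·σ₃·γ'(x) + σ⋆(τ)·γ(x) - ω·γ(x) = f(x) for every x > 0. -/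

import Mathlib

open Complex Matrix MeasureTheory

/-- `U = ℂ \ ((-∞,-1] ∪ [1,∞))`. -/
def U : Set ℂ := {ω : ℂ | ω.im ≠ 0 ∨ (-1 < ω.re ∧ ω.re < 1)}

/-- `λ(ω) = (1-ω²)^(1/2)`, principal branch of the complex square root. -/
noncomputable def lam (ω : ℂ) : ℂ := (1 - ω ^ 2) ^ ((1 : ℂ) / 2)

/-- Pauli matrix σ₁. -/
def σ1 : Matrix (Fin 2) (Fin 2) ℂ := !![0, 1; 1, 0]

/-- Pauli matrix σ₃. -/
def σ3 : Matrix (Fin 2) (Fin 2) ℂ := !![1, 0; 0, -1]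

/-- σ⋆(τ) = [[0, e^(-iτ)],[e^(iτ), 0]]. -/
noncomputable def σstar (τ : ℝ) : Matrix (Fin 2) (Fin 2) ℂ :=
  !![0, Complex.exp (-(Complex.I * τ)); Complex.exp (Complex.I * τ), 0]

/-- The decaying solution η₊. -/
noncomputable def ηplus (τ : ℝ) (ω : ℂ) (x : ℝ) : Fin 2 → ℂ :=
  if 0 ≤ x then
    Complex.exp (-(lam ω) * x) • ![Complex.exp (-(Complex.I * τ)), ω + Complex.I * lam ω]
  else
    ((Complex.exp (-(Complex.I * τ)) - 1) * (ω + Complex.I * lam ω) / (2 * Complex.I * lam ω)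
        * Complex.exp (lam ω * x)) • ![1, ω - Complex.I * lam ω]
    + ((ω * (1 - Complex.exp (-(Complex.I * τ)))
          + Complex.I * lam ω * (1 + Complex.exp (-(Complex.I * τ)))) / (2 * Complex.I * lam ω)
        * Complex.exp (-(lam ω) * x)) • ![1, ω + Complex.I * lam ω]

/-- The decaying solution η₋. -/
noncomputable def ηminus (τ : ℝ) (ω : ℂ) (x : ℝ) : Fin 2 → ℂ :=
  if x ≤ 0 then
    Complex.exp (lam ω * x) • ![1, ω - Complex.I * lam ω]
  else
    ((ω * (Complex.exp (Complex.I * τ) - 1)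
          + Complex.I * lam ω * (Complex.exp (Complex.I * τ) + 1)) / (2 * Complex.I * lam ω)
        * Complex.exp (lam ω * x)) • ![Complex.exp (-(Complex.I * τ)), ω - Complex.I * lam ω]
    + ((1 - Complex.exp (Complex.I * τ)) * (ω - Complex.I * lam ω) / (2 * Complex.I * lam ω)
        * Complex.exp (-(lam ω) * x)) • ![Complex.exp (-(Complex.I * τ)), ω + Complex.I * lam ω]

/-!
Variation of parameters. On each half-line, η₊ and η₋ coincide near every point with combinations
of exponential modes `e^{±λx} v` that solve the homogeneous equation `iσ₃v' + Mv - ωv = 0`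
(`M = σ₁` for `x < 0`, `M = σ⋆(τ)` for `x > 0`), because `λ² = 1 - ω²`. Writing
`γ = (i/φ)(F η₊ + G η₋)` with `F' = ⟨η₋, f⟩`, `G' = -⟨η₊, f⟩`, where `⟨p, f⟩ = p₂f₁ + p₁f₂`,
the residual of `γ` reduces to `(i/φ) iσ₃ (F' η₊ + G' η₋)`, and `F' η₊ + G' η₋ = W(η₊, η₋) σ₃ f`
where the Wronskian `W(η₊, η₋) = η₊,₁η₋,₂ - η₊,₂η₋,₁` equals `-φ` on both sides. Continuity of
`γ` at `0` is the matching `η±(0⁻) = η±(0⁺)`, which is what the coefficients `A, B, C, D` are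
chosen for.
-/

open Filter Topology Set

section IntegralDeriv

variable {E : Type*} [NormedAddCommGroup E] [NormedSpace ℝ E] [CompleteSpace E]
  {g : ℝ → E} {t : ℝ}

theorem hasDerivAt_integral_Iic (hg : Integrable g) (hgt : ContinuousAt g t) :
    HasDerivAt (fun u => ∫ y in Iic u, g y) (g t) t := by
  have hF : (fun u => ∫ y in Iic u, g y) = fun u => (∫ y in Iic t, g y) + ∫ y in t..u, g y := by
    ext u
    rw [← intervalIntegral.integral_Iic_sub_Iic hg.integrableOn hg.integrableOn, add_sub_cancel]
  rw [hF]
  exact (intervalIntegral.integral_hasDerivAt_right hg.intervalIntegrable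
    hg.aestronglyMeasurable.stronglyMeasurableAtFilter hgt).const_add _

theorem hasDerivAt_integral_Ici (hg : Integrable g) (hgt : ContinuousAt g t) :
    HasDerivAt (fun u => ∫ y in Ici u, g y) (-g t) t := by
  have hG : (fun u => ∫ y in Ici u, g y) = fun u => (∫ y in Ici t, g y) - ∫ y in t..u, g y := by
    ext u
    rw [← intervalIntegral.integral_Ici_sub_Ici' hg.integrableOn hg.integrableOn, sub_sub_cancel]
  rw [hG]
  exact (intervalIntegral.integral_hasDerivAt_right hg.intervalIntegrable
    hg.aestronglyMeasurable.stronglyMeasurableAtFilter hgt).const_sub _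

end IntegralDeriv

section DiracOperator

noncomputable def diracResidual (M : Matrix (Fin 2) (Fin 2) ℂ) (ω : ℂ) (v : ℝ → Fin 2 → ℂ)
    (x : ℝ) : Fin 2 → ℂ :=
  I • σ3 *ᵥ deriv v x + M *ᵥ v x - ω • v x

def SolvesDirac (M : Matrix (Fin 2) (Fin 2) ℂ) (ω : ℂ) (v : ℝ → Fin 2 → ℂ) : Prop :=
  ∀ x, DifferentiableAt ℝ v x ∧ diracResidual M ω v x = 0

def wronskian (p q : Fin 2 → ℂ) : ℂ := p 0 * q 1 - p 1 * q 0

variable {M : Matrix (Fin 2) (Fin 2) ℂ} {ω : ℂ} {v w : ℝ → Fin 2 → ℂ}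

theorem diracResidual_congr {x : ℝ} (h : v =ᶠ[𝓝 x] w) :
    diracResidual M ω v x = diracResidual M ω w x := by
  rw [diracResidual, diracResidual, h.deriv_eq, h.eq_of_nhds]

theorem SolvesDirac.add (hv : SolvesDirac M ω v) (hw : SolvesDirac M ω w) :
    SolvesDirac M ω (v + w) := by
  intro x
  obtain ⟨hvd, hvr⟩ := hv x
  obtain ⟨hwd, hwr⟩ := hw x
  refine ⟨hvd.add hwd, ?_⟩
  calc diracResidual M ω (v + w) x = diracResidual M ω v x + diracResidual M ω w x := by
        simp only [diracResidual, deriv_add hvd hwd, Pi.add_apply, mulVec_add]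
        module
    _ = 0 := by rw [hvr, hwr, add_zero]

theorem SolvesDirac.const_smul (hv : SolvesDirac M ω v) (a : ℂ) :
    SolvesDirac M ω (a • v) := by
  intro x
  obtain ⟨hvd, hvr⟩ := hv x
  refine ⟨hvd.const_smul a, ?_⟩
  calc diracResidual M ω (a • v) x = a • diracResidual M ω v x := by
        rw [diracResidual, diracResidual, (hvd.hasDerivAt.const_smul a).deriv, Pi.smul_apply]
        simp only [mulVec_smul]
        module
    _ = 0 := by rw [hvr, smul_zero]

theorem SolvesDirac.continuous (hv : SolvesDirac M ω v) : Continuous v :=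
  continuous_iff_continuousAt.2 fun x => (hv x).1.continuousAt

theorem hasDerivAt_cexp_mul_ofReal (μ : ℂ) (x : ℝ) :
    HasDerivAt (fun y : ℝ => exp (μ * y)) (μ * exp (μ * x)) x := by
  simpa [mul_comm] using (((hasDerivAt_id (x : ℂ)).const_mul μ).cexp).comp_ofReal

theorem solvesDirac_exp_smul {μ : ℂ} {c : Fin 2 → ℂ}
    (hc : μ • (I • σ3 *ᵥ c) + M *ᵥ c - ω • c = 0) :
    SolvesDirac M ω (fun x => exp (μ * x) • c) := by
  intro x
  have hd := (hasDerivAt_cexp_mul_ofReal μ x).smul_const c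
  refine ⟨hd.differentiableAt, ?_⟩
  calc diracResidual M ω (fun x => exp (μ * x) • c) x
        = exp (μ * x) • (μ • (I • σ3 *ᵥ c) + M *ᵥ c - ω • c) := by
        rw [diracResidual, hd.deriv, mul_smul]
        simp only [mulVec_smul]
        module
    _ = 0 := by rw [hc, smul_zero]

theorem σ3_mulVec (f : Fin 2 → ℂ) : σ3 *ᵥ f = ![f 0, -f 1] := by
  ext i
  fin_cases i <;> simp [σ3, mulVec, dotProduct]

theorem σstar_mulVec (τ : ℝ) (f : Fin 2 → ℂ) :
    σstar τ *ᵥ f = ![exp (-(I * τ)) * f 1, exp (I * τ) * f 0] := by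
  ext i
  fin_cases i <;> simp [σstar, mulVec, dotProduct]

theorem σ3_mulVec_σ3_mulVec (f : Fin 2 → ℂ) : σ3 *ᵥ σ3 *ᵥ f = f := by
  rw [σ3_mulVec, σ3_mulVec]
  ext i
  fin_cases i <;> simp

theorem smul_sub_smul_eq_wronskian_smul (p q f : Fin 2 → ℂ) :
    (q 1 * f 0 + q 0 * f 1) • p - (p 1 * f 0 + p 0 * f 1) • q = wronskian p q • σ3 *ᵥ f := by
  rw [σ3_mulVec]
  ext i
  fin_cases i <;>
    simp only [wronskian, Pi.sub_apply, Pi.smul_apply, smul_eq_mul, Fin.zero_eta, Fin.mk_one,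
      cons_val_zero, cons_val_one, cons_val_fin_one] <;>
    ring

end DiracOperator

section VariationOfParameters
variable {M : Matrix (Fin 2) (Fin 2) ℂ} {ω : ℂ}

theorem diracResidual_variationOfParameters {φ : ℂ} (hφ : φ ≠ 0) {P Q : ℝ → Fin 2 → ℂ}
    (hP : SolvesDirac M ω P) (hQ : SolvesDirac M ω Q) {F G : ℝ → ℂ} {f : Fin 2 → ℂ} {x : ℝ}
    (hW : wronskian (P x) (Q x) = -φ) (hF : HasDerivAt F (Q x 1 * f 0 + Q x 0 * f 1) x)
    (hG : HasDerivAt G (-(P x 1 * f 0 + P x 0 * f 1)) x) :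
    DifferentiableAt ℝ ((I / φ) • (F • P + G • Q)) x ∧
      diracResidual M ω ((I / φ) • (F • P + G • Q)) x = f := by
  obtain ⟨hPd, hPr⟩ := hP x
  obtain ⟨hQd, hQr⟩ := hQ x
  have hd := ((hF.smul hPd.hasDerivAt).add (hG.smul hQd.hasDerivAt)).const_smul (I / φ)
  refine ⟨hd.differentiableAt, ?_⟩
  calc diracResidual M ω ((I / φ) • (F • P + G • Q)) x
      = (I / φ) • (F x • diracResidual M ω P x + G x • diracResidual M ω Q x
          + I • σ3 *ᵥ ((Q x 1 * f 0 + Q x 0 * f 1) • P x - (P x 1 * f 0 + P x 0 * f 1) • Q x)) := by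
        rw [diracResidual, hd.deriv, diracResidual, diracResidual]
        simp only [Pi.smul_apply, Pi.add_apply, mulVec_add, mulVec_smul, mulVec_sub, Pi.smul_apply']
        module
    _ = ((I / φ) * I * -φ) • σ3 *ᵥ σ3 *ᵥ f := by
        rw [hPr, hQr, smul_sub_smul_eq_wronskian_smul, hW, mulVec_smul]
        module
    _ = f := by
        have hscalar : I / φ * I * -φ = 1 := by
          field_simp
          rw [I_sq, neg_neg]
        rw [σ3_mulVec_σ3_mulVec, hscalar, one_smul]

theorem diracResidual_variationOfParameters_of_eventuallyEq {φ : ℂ} (hφ : φ ≠ 0)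
    {P Q P₀ Q₀ : ℝ → Fin 2 → ℂ} (hP : SolvesDirac M ω P) (hQ : SolvesDirac M ω Q) {F G : ℝ → ℂ}
    {f : Fin 2 → ℂ} {x : ℝ} (hPP₀ : P₀ =ᶠ[𝓝 x] P) (hQQ₀ : Q₀ =ᶠ[𝓝 x] Q)
    (hW : wronskian (P x) (Q x) = -φ)
    (hF : HasDerivAt F (Q₀ x 1 * f 0 + Q₀ x 0 * f 1) x)
    (hG : HasDerivAt G (-(P₀ x 1 * f 0 + P₀ x 0 * f 1)) x) :
    DifferentiableAt ℝ ((I / φ) • (F • P₀ + G • Q₀)) x ∧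
      diracResidual M ω ((I / φ) • (F • P₀ + G • Q₀)) x = f := by
  have heq : (I / φ) • (F • P₀ + G • Q₀) =ᶠ[𝓝 x] (I / φ) • (F • P + G • Q) := by
    filter_upwards [hPP₀, hQQ₀] with y hPy hQy
    simp only [Pi.smul_apply, Pi.add_apply, Pi.smul_apply', hPy, hQy]
  rw [hQQ₀.eq_of_nhds] at hF
  rw [hPP₀.eq_of_nhds] at hG
  obtain ⟨hd, hres⟩ := diracResidual_variationOfParameters hφ hP hQ hW hF hG
  exact ⟨hd.congr_of_eventuallyEq heq, (diracResidual_congr heq).trans hres⟩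

end VariationOfParameters

theorem lam_sq (ω : ℂ) : lam ω ^ 2 = 1 - ω ^ 2 := by
  rw [lam, show (1 : ℂ) / 2 = ((2 : ℕ) : ℂ)⁻¹ by norm_num]
  exact cpow_nat_inv_pow (1 - ω ^ 2) two_ne_zero

theorem lam_ne_zero {ω : ℂ} (hω : ω ∈ U) : lam ω ≠ 0 := by
  intro h
  have h2 : (ω - 1) * (ω + 1) = 0 := by linear_combination lam_sq ω - lam ω * h
  rcases mul_eq_zero.1 h2 with h1 | h1
  · obtain rfl : ω = 1 := by linear_combination h1
    norm_num [U] at hω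
  · obtain rfl : ω = -1 := by linear_combination h1
    norm_num [U] at hω

theorem exp_mul_I_mul_exp_neg (τ : ℝ) : exp (I * τ) * exp (-(I * τ)) = 1 := by
  rw [← exp_add, add_neg_cancel, exp_zero]

theorem σstar_zero : σstar 0 = σ1 := by
  simp [σstar, σ1]

theorem σstar_mode (τ : ℝ) {ω μ : ℂ} (hμ : μ ^ 2 = 1 - ω ^ 2) :
    μ • (I • σ3 *ᵥ ![exp (-(I * τ)), ω - I * μ]) + σstar τ *ᵥ ![exp (-(I * τ)), ω - I * μ]
      - ω • ![exp (-(I * τ)), ω - I * μ] = 0 := by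
  rw [σ3_mulVec, σstar_mulVec]
  ext i
  fin_cases i <;>
    simp only [Pi.zero_apply, Pi.add_apply, Pi.sub_apply, Pi.smul_apply, smul_eq_mul, Fin.zero_eta,
      Fin.mk_one, cons_val_zero, cons_val_one, cons_val_fin_one]
  · ring
  · linear_combination μ ^ 2 * I_sq - hμ + exp_mul_I_mul_exp_neg τ

theorem σ1_mode {ω μ : ℂ} (hμ : μ ^ 2 = 1 - ω ^ 2) :
    μ • (I • σ3 *ᵥ ![1, ω - I * μ]) + σ1 *ᵥ ![1, ω - I * μ] - ω • ![1, ω - I * μ] = 0 := by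
  simpa only [σstar_zero, ofReal_zero, mul_zero, neg_zero, exp_zero] using σstar_mode 0 hμ

section DecayingSolutions

variable (τ : ℝ) (ω : ℂ)

noncomputable def coeffA : ℂ := (exp (-(I * τ)) - 1) * (ω + I * lam ω) / (2 * I * lam ω)

noncomputable def coeffB : ℂ :=
  (ω * (1 - exp (-(I * τ))) + I * lam ω * (1 + exp (-(I * τ)))) / (2 * I * lam ω)

noncomputable def coeffC : ℂ :=
  (ω * (exp (I * τ) - 1) + I * lam ω * (exp (I * τ) + 1)) / (2 * I * lam ω)

noncomputable def coeffD : ℂ := (1 - exp (I * τ)) * (ω - I * lam ω) / (2 * I * lam ω)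

noncomputable def ηplusLeft (x : ℝ) : Fin 2 → ℂ :=
  (coeffA τ ω * exp (lam ω * x)) • ![1, ω - I * lam ω]
    + (coeffB τ ω * exp (-(lam ω) * x)) • ![1, ω + I * lam ω]

noncomputable def ηplusRight (x : ℝ) : Fin 2 → ℂ :=
  exp (-(lam ω) * x) • ![exp (-(I * τ)), ω + I * lam ω]

noncomputable def ηminusLeft (x : ℝ) : Fin 2 → ℂ :=
  exp (lam ω * x) • ![1, ω - I * lam ω]

noncomputable def ηminusRight (x : ℝ) : Fin 2 → ℂ :=
  (coeffC τ ω * exp (lam ω * x)) • ![exp (-(I * τ)), ω - I * lam ω]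
    + (coeffD τ ω * exp (-(lam ω) * x)) • ![exp (-(I * τ)), ω + I * lam ω]

theorem ηplus_eq_ite :
    ηplus τ ω = fun x => if 0 ≤ x then ηplusRight τ ω x else ηplusLeft τ ω x := rfl

theorem ηminus_eq_ite :
    ηminus τ ω = fun x => if x ≤ 0 then ηminusLeft ω x else ηminusRight τ ω x := rfl

theorem solvesDirac_ηminusLeft : SolvesDirac σ1 ω (ηminusLeft ω) :=
  solvesDirac_exp_smul (σ1_mode (lam_sq ω))

theorem solvesDirac_ηplusRight : SolvesDirac (σstar τ) ω (ηplusRight τ ω) := by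
  have h := σstar_mode τ (ω := ω) (μ := -lam ω) (by rw [neg_sq, lam_sq])
  rw [mul_neg, sub_neg_eq_add] at h
  exact solvesDirac_exp_smul h

theorem solvesDirac_ηplusLeft : SolvesDirac σ1 ω (ηplusLeft τ ω) := by
  have h := σ1_mode (ω := ω) (μ := -lam ω) (by rw [neg_sq, lam_sq])
  rw [mul_neg, sub_neg_eq_add] at h
  have hsum := ((solvesDirac_exp_smul (σ1_mode (lam_sq ω))).const_smul (coeffA τ ω)).add
    ((solvesDirac_exp_smul h).const_smul (coeffB τ ω))
  convert hsum using 1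
  ext x : 1
  simp only [ηplusLeft, Pi.add_apply, Pi.smul_apply, mul_smul]

theorem solvesDirac_ηminusRight : SolvesDirac (σstar τ) ω (ηminusRight τ ω) := by
  have h := σstar_mode τ (ω := ω) (μ := -lam ω) (by rw [neg_sq, lam_sq])
  rw [mul_neg, sub_neg_eq_add] at h
  have hsum := ((solvesDirac_exp_smul (σstar_mode τ (lam_sq ω))).const_smul (coeffC τ ω)).add
    ((solvesDirac_exp_smul h).const_smul (coeffD τ ω))
  convert hsum using 1
  ext x : 1
  simp only [ηminusRight, Pi.add_apply, Pi.smul_apply, mul_smul]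

variable {ω}

theorem ηplusLeft_zero (hlam : lam ω ≠ 0) : ηplusLeft τ ω 0 = ηplusRight τ ω 0 := by
  ext i
  fin_cases i <;>
    simp only [ηplusLeft, ηplusRight, coeffA, coeffB, ofReal_zero, mul_zero, exp_zero, mul_one,
      Pi.add_apply, Pi.smul_apply, smul_eq_mul, Fin.zero_eta, Fin.mk_one,
      cons_val_zero, cons_val_one, cons_val_fin_one] <;>
    field_simp <;> ring

theorem ηminusLeft_zero (hlam : lam ω ≠ 0) : ηminusLeft ω 0 = ηminusRight τ ω 0 := by
  ext i
  fin_cases i <;>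
    simp only [ηminusLeft, ηminusRight, coeffC, coeffD, ofReal_zero, mul_zero, exp_zero, mul_one,
      Pi.add_apply, Pi.smul_apply, smul_eq_mul, Fin.zero_eta, Fin.mk_one,
      cons_val_zero, cons_val_one, cons_val_fin_one] <;>
    field_simp
  · linear_combination (-2 * I * lam ω) * exp_mul_I_mul_exp_neg τ
  · ring

theorem wronskian_ηplusLeft_ηminusLeft (hlam : lam ω ≠ 0) (x : ℝ) :
    wronskian (ηplusLeft τ ω x) (ηminusLeft ω x)
      = -(I * lam ω * (exp (-(I * τ)) + 1) - ω * (exp (-(I * τ)) - 1)) := by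
  simp only [wronskian, ηplusLeft, ηminusLeft, coeffA, coeffB, neg_mul, exp_neg, Pi.add_apply,
    Pi.smul_apply, smul_eq_mul, cons_val_zero, cons_val_one, cons_val_fin_one]
  field_simp
  ring

theorem wronskian_ηplusRight_ηminusRight (hlam : lam ω ≠ 0) (x : ℝ) :
    wronskian (ηplusRight τ ω x) (ηminusRight τ ω x)
      = -(I * lam ω * (exp (-(I * τ)) + 1) - ω * (exp (-(I * τ)) - 1)) := by
  simp only [wronskian, ηplusRight, ηminusRight, coeffC, coeffD, neg_mul, exp_neg, Pi.add_apply,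
    Pi.smul_apply, smul_eq_mul, cons_val_zero, cons_val_one, cons_val_fin_one]
  field_simp
  ring

theorem continuous_ηplus (hlam : lam ω ≠ 0) : Continuous (ηplus τ ω) := by
  rw [ηplus_eq_ite]
  refine (solvesDirac_ηplusRight τ ω).continuous.if_le (solvesDirac_ηplusLeft τ ω).continuous
    continuous_const continuous_id fun x hx => ?_
  rw [← hx, ηplusLeft_zero τ hlam]

theorem continuous_ηminus (hlam : lam ω ≠ 0) : Continuous (ηminus τ ω) := by
  rw [ηminus_eq_ite]
  refine (solvesDirac_ηminusLeft ω).continuous.if_le (solvesDirac_ηminusRight τ ω).continuous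
    continuous_id continuous_const fun x hx => ?_
  rw [hx, ηminusLeft_zero τ hlam]

variable {x : ℝ}

theorem ηplus_eventuallyEq_left (hx : x < 0) : ηplus τ ω =ᶠ[𝓝 x] ηplusLeft τ ω := by
  filter_upwards [Iio_mem_nhds hx] with y (hy : y < 0)
  simp only [ηplus_eq_ite, not_le.2 hy, if_false]

theorem ηminus_eventuallyEq_left (hx : x < 0) : ηminus τ ω =ᶠ[𝓝 x] ηminusLeft ω := by
  filter_upwards [Iio_mem_nhds hx] with y (hy : y < 0)
  simp only [ηminus_eq_ite, hy.le, if_true]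

theorem ηplus_eventuallyEq_right (hx : 0 < x) : ηplus τ ω =ᶠ[𝓝 x] ηplusRight τ ω := by
  filter_upwards [Ioi_mem_nhds hx] with y (hy : 0 < y)
  simp only [ηplus_eq_ite, hy.le, if_true]

theorem ηminus_eventuallyEq_right (hx : 0 < x) : ηminus τ ω =ᶠ[𝓝 x] ηminusRight τ ω := by
  filter_upwards [Ioi_mem_nhds hx] with y (hy : 0 < y)
  simp only [ηminus_eq_ite, not_le.2 hy, if_false]

end DecayingSolutions

theorem integrable_pairing {p f : ℝ → Fin 2 → ℂ} (hp : Continuous p) (hf : Continuous f)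
    (hs : HasCompactSupport f) : Integrable (fun y => p y 1 * f y 0 + p y 0 * f y 1) := by
  refine Continuous.integrable_of_hasCompactSupport (by fun_prop) (hs.mono fun y hy => ?_)
  contrapose! hy
  rw [Function.notMem_support] at hy ⊢
  simp [hy]

theorem stmt8 (τ : ℝ) (ω : ℂ) (hω : ω ∈ U)
    (hφ : Complex.I * lam ω * (Complex.exp (-(Complex.I * τ)) + 1)
        - ω * (Complex.exp (-(Complex.I * τ)) - 1) ≠ 0)
    (f : ℝ → Fin 2 → ℂ) (hf : Continuous f) (hsupp : HasCompactSupport f) :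
    let φ : ℂ := Complex.I * lam ω * (Complex.exp (-(Complex.I * τ)) + 1)
        - ω * (Complex.exp (-(Complex.I * τ)) - 1)
    let γ : ℝ → Fin 2 → ℂ := fun x =>
      (Complex.I / φ) •
        ((∫ y in Set.Iic x, (ηminus τ ω y 1 * f y 0 + ηminus τ ω y 0 * f y 1)) • ηplus τ ω x
          + (∫ y in Set.Ici x, (ηplus τ ω y 1 * f y 0 + ηplus τ ω y 0 * f y 1)) • ηminus τ ω x)
    Continuous γ ∧
    (∀ x : ℝ, x ≠ 0 → DifferentiableAt ℝ γ x) ∧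
    (∀ x : ℝ, x < 0 →
      Complex.I • σ3.mulVec (deriv γ x) + σ1.mulVec (γ x) - ω • γ x = f x) ∧
    (∀ x : ℝ, 0 < x →
      Complex.I • σ3.mulVec (deriv γ x) + (σstar τ).mulVec (γ x) - ω • γ x = f x) := by
  intro φ γ
  have hlam := lam_ne_zero hω
  have hplus := continuous_ηplus τ hlam
  have hminus := continuous_ηminus τ hlam
  set F : ℝ → ℂ := fun x => ∫ y in Iic x, (ηminus τ ω y 1 * f y 0 + ηminus τ ω y 0 * f y 1)
  set G : ℝ → ℂ := fun x => ∫ y in Ici x, (ηplus τ ω y 1 * f y 0 + ηplus τ ω y 0 * f y 1)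
  have hF (x : ℝ) : HasDerivAt F (ηminus τ ω x 1 * f x 0 + ηminus τ ω x 0 * f x 1) x :=
    hasDerivAt_integral_Iic (integrable_pairing hminus hf hsupp) (by fun_prop)
  have hG (x : ℝ) : HasDerivAt G (-(ηplus τ ω x 1 * f x 0 + ηplus τ ω x 0 * f x 1)) x :=
    hasDerivAt_integral_Ici (integrable_pairing hplus hf hsupp) (by fun_prop)
  have hγ : γ = (I / φ) • (F • ηplus τ ω + G • ηminus τ ω) := rfl
  have left (x : ℝ) (hx : x < 0) :
      DifferentiableAt ℝ γ x ∧ diracResidual σ1 ω γ x = f x :=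
    hγ ▸ diracResidual_variationOfParameters_of_eventuallyEq hφ (solvesDirac_ηplusLeft τ ω)
      (solvesDirac_ηminusLeft ω) (ηplus_eventuallyEq_left τ hx) (ηminus_eventuallyEq_left τ hx)
      (wronskian_ηplusLeft_ηminusLeft τ hlam x) (hF x) (hG x)
  have right (x : ℝ) (hx : 0 < x) :
      DifferentiableAt ℝ γ x ∧ diracResidual (σstar τ) ω γ x = f x :=
    hγ ▸ diracResidual_variationOfParameters_of_eventuallyEq hφ (solvesDirac_ηplusRight τ ω)
      (solvesDirac_ηminusRight τ ω) (ηplus_eventuallyEq_right τ hx)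
      (ηminus_eventuallyEq_right τ hx) (wronskian_ηplusRight_ηminusRight τ hlam x) (hF x) (hG x)
  refine ⟨?_, fun x hx => hx.lt_or_gt.elim (fun h => (left x h).1) (fun h => (right x h).1),
    fun x hx => (left x hx).2, fun x hx => (right x hx).2⟩
  have hFc : Continuous F := continuous_iff_continuousAt.2 fun x => (hF x).continuousAt
  have hGc : Continuous G := continuous_iff_continuousAt.2 fun x => (hG x).continuousAt
  rw [hγ]
  fun_prop
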